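/- arXiv:2203.03038 — 2 statements merged into one kernel-verified Lean document; each statement's English description precedes it below -/
import Mathlib

section
/- Let μ be a probability measure on ℝ with characteristic function Φ_μ, and let θ : Ω → ℝ be a random variable with law μ on a probability space (Ω, F, P). Let α₁, α₂, α₃ ∈ ℕ and assume E[|θ|^{α₁}] < ∞. Then the mixed-trigonometric-polynomial moment E[θ^{α₁}·cos^{α₂}(θ)·sin^{α₃}(θ)], viewed as a complex number, equals (1 / (i^{α₁+α₃}·2^{α₂+α₃})) · Σ_{k₁=0}^{α₂} Σ_{k₂=0}^{α₃} C(α₂,k₁)·C(α₃,k₂)·(−1)^{α₃−k₂} · (d^{α₁}/dt^{α₁} Φ_μ)(t) evaluated at t = 2(k₁+k₂) − α₂ − α₃, where C(n,k) denotes the binomial coefficient. -/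
/-!
Writing `w = exp (i x)`, Euler's formulas `cos x = (w + w⁻¹) / 2` and `sin x = (w - w⁻¹) / (2 i)`
and the binomial theorem turn `cos x ^ α₂ * sin x ^ α₃` into a combination of the characters
`exp (i t x)` with `t = 2 (k₁ + k₂) - α₂ - α₃`. Since `θ` has a finite moment of order `α₁`,
differentiating `Φ_μ` under the integral sign gives `Φ_μ^(α₁) (t) = i ^ α₁ ∫ x ^ α₁ exp (i t x) dμ`,
and integrating the expansion term by term yields the formula.
-/

open MeasureTheory

/-- The characteristic function of a measure `μ` on `ℝ`:
`charFun μ t = ∫ x, exp (i t x) ∂μ` (Mathlib's `charFun` specialized to `ℝ`). -/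
noncomputable def charFun (μ : Measure ℝ) (t : ℝ) : ℂ :=
  ∫ x, Complex.exp ((x * t : ℝ) * Complex.I) ∂μ

open Complex Finset

theorem add_mul_inv_pow {K : Type*} [Field K] {z : K} (hz : z ≠ 0) (c : K) (n : ℕ) :
    (z + c * z⁻¹) ^ n =
      ∑ k ∈ range (n + 1), (n.choose k : K) * c ^ (n - k) * z ^ (2 * k - n : ℤ) := by
  rw [add_pow]
  refine sum_congr rfl fun k hk => ?_
  have hkn : k ≤ n := Nat.lt_succ_iff.mp (mem_range.mp hk)
  have hexp : (2 * k - n : ℤ) = k - (n - k : ℕ) := by push_cast [Nat.cast_sub hkn]; ring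
  rw [hexp, zpow_sub₀ hz, zpow_natCast, zpow_natCast, mul_pow, inv_pow]
  ring

theorem Complex.cos_pow_mul_sin_pow (z : ℂ) (a b : ℕ) :
    cos z ^ a * sin z ^ b =
      1 / (I ^ b * 2 ^ (a + b)) * ∑ k₁ ∈ range (a + 1), ∑ k₂ ∈ range (b + 1),
        (a.choose k₁ : ℂ) * (b.choose k₂ : ℂ) * (-1) ^ (b - k₂) *
          exp ((2 * (k₁ + k₂) - a - b : ℤ) * z * I) := by
  set w := exp (z * I)
  have hw : w ≠ 0 := exp_ne_zero _
  have hinv : exp (-z * I) = w⁻¹ := by rw [neg_mul, exp_neg]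
  have hcos : cos z = (w + 1 * w⁻¹) / 2 := by
    linear_combination (two_cos z + hinv) / 2
  have hsin : sin z = (w + (-1) * w⁻¹) / (2 * I) := by
    rw [eq_div_iff (mul_ne_zero two_ne_zero I_ne_zero)]
    linear_combination I * two_sin z + I ^ 2 * hinv + (w⁻¹ - w) * I_sq
  rw [hcos, hsin, div_pow, div_pow, add_mul_inv_pow hw, add_mul_inv_pow hw, div_mul_div_comm,
    sum_mul_sum, mul_pow, one_div_mul_eq_div,
    show (2 : ℂ) ^ a * (2 ^ b * I ^ b) = I ^ b * 2 ^ (a + b) by ring]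
  congr 1
  refine sum_congr rfl fun k₁ _ => ?_
  refine sum_congr rfl fun k₂ _ => ?_
  have hprod : exp ((2 * (k₁ + k₂) - a - b : ℤ) * z * I) =
      w ^ (2 * k₁ - a : ℤ) * w ^ (2 * k₂ - b : ℤ) := by
    rw [← zpow_add₀ hw, ← exp_int_mul, mul_assoc]
    push_cast
    ring_nf
  rw [hprod, one_pow]
  ring

section Moments

variable {μ : Measure ℝ} {n : ℕ}

theorem memLp_id_of_integrable_abs_pow (h : Integrable (fun x => |x| ^ n) μ) : MemLp id n μ := by
  rcases Nat.eq_zero_or_pos n with rfl | hn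
  · rw [Nat.cast_zero, memLp_zero_iff_aestronglyMeasurable]
    exact aestronglyMeasurable_id
  · refine (integrable_norm_rpow_iff (f := id) aestronglyMeasurable_id (by positivity)
      (ENNReal.natCast_ne_top n)).1 ?_
    simpa using h

variable [IsFiniteMeasure μ]

theorem integrable_pow_mul_cexp (hμ : MemLp id n μ) (t : ℝ) :
    Integrable (fun x : ℝ => (x : ℂ) ^ n * exp (t * x * I)) μ := by
  refine hμ.integrable_norm_pow'.mono' (by fun_prop) (ae_of_all _ fun x => ?_)
  simp [norm_exp]

theorem integral_pow_mul_cexp (hμ : MemLp id n μ) (t : ℝ) :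
    ∫ x, (x : ℂ) ^ n * exp (t * x * I) ∂μ =
      iteratedDeriv n (MeasureTheory.charFun μ) t / I ^ n := by
  rw [iteratedDeriv_charFun hμ, mul_div_cancel_left₀ _ (pow_ne_zero n I_ne_zero)]

theorem integral_pow_mul_cos_pow_mul_sin_pow (hμ : MemLp id n μ) (a b : ℕ) :
    ∫ x, (x : ℂ) ^ n * cos x ^ a * sin x ^ b ∂μ =
      1 / (I ^ (n + b) * 2 ^ (a + b)) * ∑ k₁ ∈ range (a + 1), ∑ k₂ ∈ range (b + 1),
        (a.choose k₁ : ℂ) * (b.choose k₂ : ℂ) * (-1) ^ (b - k₂) *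
          iteratedDeriv n (MeasureTheory.charFun μ) ((2 * (k₁ + k₂) - a - b : ℤ) : ℝ) := by
  let c (k₁ k₂ : ℕ) : ℂ := (a.choose k₁ : ℂ) * (b.choose k₂ : ℂ) * (-1) ^ (b - k₂)
  let t (k₁ k₂ : ℕ) : ℝ := ((2 * (k₁ + k₂) - a - b : ℤ) : ℝ)
  calc ∫ x, (x : ℂ) ^ n * cos x ^ a * sin x ^ b ∂μ
      = ∫ x, 1 / (I ^ b * 2 ^ (a + b)) * ∑ k₁ ∈ range (a + 1), ∑ k₂ ∈ range (b + 1),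
          c k₁ k₂ * ((x : ℂ) ^ n * exp (t k₁ k₂ * x * I)) ∂μ := by
        congr 1 with x
        rw [mul_assoc, cos_pow_mul_sin_pow, mul_left_comm]
        congr 1
        simp_rw [mul_sum]
        refine sum_congr rfl fun k₁ _ => sum_congr rfl fun k₂ _ => ?_
        simp only [c, t, ofReal_intCast]
        ring
    _ = 1 / (I ^ b * 2 ^ (a + b)) * ∑ k₁ ∈ range (a + 1), ∑ k₂ ∈ range (b + 1),
          c k₁ k₂ * (iteratedDeriv n (MeasureTheory.charFun μ) (t k₁ k₂) / I ^ n) := by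
        have hint (k₁ k₂ : ℕ) :
            Integrable (fun x : ℝ => c k₁ k₂ * ((x : ℂ) ^ n * exp (t k₁ k₂ * x * I))) μ :=
          (integrable_pow_mul_cexp hμ _).const_mul _
        rw [integral_const_mul,
          integral_finsetSum _ fun k₁ _ => integrable_finsetSum _ fun k₂ _ => hint k₁ k₂]
        congr 1
        refine sum_congr rfl fun k₁ _ => ?_
        rw [integral_finsetSum _ fun k₂ _ => hint k₁ k₂]
        refine sum_congr rfl fun k₂ _ => ?_
        rw [integral_const_mul, integral_pow_mul_cexp hμ]
    _ = _ := by
        simp_rw [mul_sum, pow_add]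
        refine sum_congr rfl fun k₁ _ => sum_congr rfl fun k₂ _ => ?_
        field_simp
        rfl

end Moments

theorem charFun_eq_measureTheory_charFun (μ : Measure ℝ) :
    _root_.charFun μ = MeasureTheory.charFun μ := by
  ext t
  rw [charFun_apply_real, _root_.charFun]
  push_cast
  simp_rw [mul_comm (t : ℂ)]

theorem stmt_8_general {Ω : Type*} [MeasurableSpace Ω] (P : Measure Ω)
    (μ : Measure ℝ) [IsProbabilityMeasure μ]
    (θ : Ω → ℝ) (hmeas : Measurable θ) (hlaw : P.map θ = μ) (α₁ α₂ α₃ : ℕ)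
    (hint : Integrable (fun ω => |θ ω| ^ α₁) P) :
    ((∫ ω, (θ ω) ^ α₁ * (Real.cos (θ ω)) ^ α₂ * (Real.sin (θ ω)) ^ α₃ ∂P : ℝ) : ℂ) =
      (1 / (Complex.I ^ (α₁ + α₃) * 2 ^ (α₂ + α₃))) *
        ∑ k₁ ∈ Finset.range (α₂ + 1), ∑ k₂ ∈ Finset.range (α₃ + 1),
          (α₂.choose k₁ : ℂ) * (α₃.choose k₂ : ℂ) * (-1 : ℂ) ^ (α₃ - k₂) *
            iteratedDeriv α₁ (_root_.charFun μ) ((2 * (k₁ + k₂) - α₂ - α₃ : ℤ) : ℝ) := by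
  have hmoment : MemLp id α₁ μ := by
    refine memLp_id_of_integrable_abs_pow ?_
    rw [← hlaw]
    exact (integrable_map_measure (by fun_prop) hmeas.aemeasurable).2 hint
  rw [charFun_eq_measureTheory_charFun, ← integral_pow_mul_cos_pow_mul_sin_pow hmoment, ← hlaw,
    integral_map hmeas.aemeasurable (by fun_prop), ← integral_complex_ofReal]
  simp only [ofReal_mul, ofReal_pow, ofReal_cos, ofReal_sin]

/-- Lemma 2: mixed-trigonometric-polynomial moments in terms of derivatives of the
characteristic function. -/
theorem stmt_8 {Ω : Type*} [MeasurableSpace Ω] (P : Measure Ω) [IsProbabilityMeasure P]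
    (μ : Measure ℝ) [IsProbabilityMeasure μ]
    (θ : Ω → ℝ) (hmeas : Measurable θ) (hlaw : P.map θ = μ) (α₁ α₂ α₃ : ℕ)
    (hint : Integrable (fun ω => |θ ω| ^ α₁) P) :
    ((∫ ω, (θ ω) ^ α₁ * (Real.cos (θ ω)) ^ α₂ * (Real.sin (θ ω)) ^ α₃ ∂P : ℝ) : ℂ) =
      (1 / (Complex.I ^ (α₁ + α₃) * 2 ^ (α₂ + α₃))) *
        ∑ k₁ ∈ Finset.range (α₂ + 1), ∑ k₂ ∈ Finset.range (α₃ + 1),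
          (α₂.choose k₁ : ℂ) * (α₃.choose k₂ : ℂ) * (-1 : ℂ) ^ (α₃ - k₂) *
            iteratedDeriv α₁ (_root_.charFun μ) ((2 * (k₁ + k₂) - α₂ - α₃ : ℤ) : ℝ) :=
  stmt_8_general P μ θ hmeas hlaw α₁ α₂ α₃ hint
end

section
/- Let (Ω, F, P) be a probability space and θ : Ω → ℝ a measurable random variable with E[|θ|^{α₁}] < ∞, where α₁, α₂, α₃ ∈ ℕ. Then the mixed-trigonometric-polynomial moment E[θ^{α₁}·cos^{α₂}(θ)·sin^{α₃}(θ)], viewed as a complex number, equals (1 / (i^{α₃}·2^{α₂+α₃})) · Σ_{k₁=0}^{α₂} Σ_{k₂=0}^{α₃} C(α₂,k₁)·C(α₃,k₂)·(−1)^{α₃−k₂} · E[θ^{α₁}·exp(i·(2(k₁+k₂) − α₂ − α₃)·θ)], where C(n,k) denotes the binomial coefficient and i is the imaginary unit. -/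
open MeasureTheory Complex Finset

lemma key_pt (α₁ α₂ α₃ : ℕ) (x : ℝ) :
    ((x ^ α₁ * (Real.cos x) ^ α₂ * (Real.sin x) ^ α₃ : ℝ) : ℂ) =
      (1 / (Complex.I ^ α₃ * 2 ^ (α₂ + α₃))) *
        ∑ k₁ ∈ Finset.range (α₂ + 1), ∑ k₂ ∈ Finset.range (α₃ + 1),
          (α₂.choose k₁ : ℂ) * (α₃.choose k₂ : ℂ) * (-1 : ℂ) ^ (α₃ - k₂) *
            ((x : ℂ) ^ α₁ *
              Complex.exp (Complex.I * ((2 * (k₁ + k₂) - α₂ - α₃ : ℤ) : ℂ) * (x : ℂ))) := by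
  have hne : (Complex.I ^ α₃ * 2 ^ (α₂ + α₃) : ℂ) ≠ 0 :=
    mul_ne_zero (pow_ne_zero _ I_ne_zero) (pow_ne_zero _ two_ne_zero)
  rw [one_div, inv_mul_eq_div, eq_div_iff hne]
  set a := Complex.exp ((x : ℂ) * I) with ha
  set b := Complex.exp (-((x : ℂ) * I)) with hb
  have ha' : a = (Real.cos x : ℂ) + (Real.sin x : ℂ) * I := by
    rw [ha, Complex.exp_mul_I, Complex.ofReal_cos, Complex.ofReal_sin]
  have hb' : b = (Real.cos x : ℂ) - (Real.sin x : ℂ) * I := by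
    rw [hb, ← neg_mul, show (-(x:ℂ)) = ((-x : ℝ) : ℂ) by push_cast; ring,
      Complex.exp_mul_I, ← Complex.ofReal_cos, ← Complex.ofReal_sin,
      Real.cos_neg, Real.sin_neg]
    push_cast; ring
  have hab : a + b = 2 * (Real.cos x : ℂ) := by rw [ha', hb']; ring
  have hab2 : a - b = 2 * (Real.sin x : ℂ) * I := by rw [ha', hb']; ring
  calc ((x ^ α₁ * (Real.cos x) ^ α₂ * (Real.sin x) ^ α₃ : ℝ) : ℂ) *
        (Complex.I ^ α₃ * 2 ^ (α₂ + α₃))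
      = (x:ℂ) ^ α₁ * (2 * (Real.cos x : ℂ)) ^ α₂ * (2 * (Real.sin x : ℂ) * I) ^ α₃ := by
        push_cast; rw [pow_add]; ring
    _ = (x:ℂ) ^ α₁ * ((a + b) ^ α₂ * (a - b) ^ α₃) := by rw [hab, hab2]; ring
    _ = _ := by
        rw [add_pow, sub_pow, Finset.sum_mul_sum, Finset.mul_sum]
        refine Finset.sum_congr rfl fun k₁ hk₁ => ?_
        rw [Finset.mul_sum]
        refine Finset.sum_congr rfl fun k₂ hk₂ => ?_
        rw [Finset.mem_range] at hk₁ hk₂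
        have hsign : ((-1 : ℂ)) ^ (k₂ + α₃) = (-1) ^ (α₃ - k₂) := by
          rw [show k₂ + α₃ = (α₃ - k₂) + 2 * k₂ by omega, pow_add, pow_mul]
          simp
        have hexp : a ^ (k₁ + k₂) * b ^ ((α₂ - k₁) + (α₃ - k₂)) =
            Complex.exp (Complex.I * ((2 * (k₁ + k₂) - α₂ - α₃ : ℤ) : ℂ) * (x : ℂ)) := by
          rw [ha, hb, ← Complex.exp_nat_mul, ← Complex.exp_nat_mul, ← Complex.exp_add]
          congr 1
          push_cast [Nat.cast_sub (by omega : k₁ ≤ α₂), Nat.cast_sub (by omega : k₂ ≤ α₃)]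
          ring
        rw [← hexp, hsign]
        ring

/-- Integral (derivative-free) form of Lemma 2: mixed-trigonometric-polynomial moments
as finite linear combinations of expectations `E[θ^{α₁} e^{ikθ}]`. -/
theorem stmt_9 {Ω : Type*} [MeasurableSpace Ω] (P : Measure Ω) [IsProbabilityMeasure P]
    (θ : Ω → ℝ) (hmeas : Measurable θ) (α₁ α₂ α₃ : ℕ)
    (hint : Integrable (fun ω => |θ ω| ^ α₁) P) :
    ((∫ ω, (θ ω) ^ α₁ * (Real.cos (θ ω)) ^ α₂ * (Real.sin (θ ω)) ^ α₃ ∂P : ℝ) : ℂ) =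
      (1 / (Complex.I ^ α₃ * 2 ^ (α₂ + α₃))) *
        ∑ k₁ ∈ Finset.range (α₂ + 1), ∑ k₂ ∈ Finset.range (α₃ + 1),
          (α₂.choose k₁ : ℂ) * (α₃.choose k₂ : ℂ) * (-1 : ℂ) ^ (α₃ - k₂) *
            ∫ ω, (θ ω : ℂ) ^ α₁ *
              Complex.exp (Complex.I * ((2 * (k₁ + k₂) - α₂ - α₃ : ℤ) : ℂ) * (θ ω : ℂ)) ∂P := by
  -- integrability of each exponential term
  have hintg : ∀ c : ℤ, Integrable
      (fun ω => (θ ω : ℂ) ^ α₁ * Complex.exp (Complex.I * (c : ℂ) * (θ ω : ℂ))) P := by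
    intro c
    have hm : AEStronglyMeasurable
        (fun ω => (θ ω : ℂ) ^ α₁ * Complex.exp (Complex.I * (c : ℂ) * (θ ω : ℂ))) P := by
      refine (((Complex.measurable_ofReal.comp hmeas).pow_const α₁).mul ?_).aestronglyMeasurable
      exact Complex.measurable_exp.comp
        ((measurable_const.mul (Complex.measurable_ofReal.comp hmeas)))
    refine hint.mono' hm (Filter.Eventually.of_forall fun ω => ?_)
    have habs : ‖Complex.exp (Complex.I * (c : ℂ) * (θ ω : ℂ))‖ = 1 := by
      rw [Complex.norm_exp]
      simp [Complex.mul_re, Complex.mul_im]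
    rw [norm_mul, norm_pow]
    simp only [habs, mul_one, Complex.norm_real, Real.norm_eq_abs]
    exact le_refl _
  have hcoe : ((∫ ω, (θ ω) ^ α₁ * (Real.cos (θ ω)) ^ α₂ * (Real.sin (θ ω)) ^ α₃ ∂P : ℝ) : ℂ) =
      ∫ ω, (((θ ω) ^ α₁ * (Real.cos (θ ω)) ^ α₂ * (Real.sin (θ ω)) ^ α₃ : ℝ) : ℂ) ∂P :=
    (integral_ofReal (𝕜 := ℂ)).symm
  rw [hcoe]
  calc (∫ ω, (((θ ω) ^ α₁ * (Real.cos (θ ω)) ^ α₂ * (Real.sin (θ ω)) ^ α₃ : ℝ) : ℂ) ∂P)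
      = ∫ ω, (1 / (Complex.I ^ α₃ * 2 ^ (α₂ + α₃))) *
          ∑ k₁ ∈ Finset.range (α₂ + 1), ∑ k₂ ∈ Finset.range (α₃ + 1),
            (α₂.choose k₁ : ℂ) * (α₃.choose k₂ : ℂ) * (-1 : ℂ) ^ (α₃ - k₂) *
              ((θ ω : ℂ) ^ α₁ *
                Complex.exp (Complex.I * ((2 * (k₁ + k₂) - α₂ - α₃ : ℤ) : ℂ) * (θ ω : ℂ))) ∂P := by
        exact integral_congr_ae (Filter.Eventually.of_forall fun ω => key_pt α₁ α₂ α₃ (θ ω))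
    _ = _ := by
        rw [integral_const_mul]
        congr 1
        rw [integral_finset_sum]
        · refine Finset.sum_congr rfl fun k₁ hk₁ => ?_
          rw [integral_finset_sum]
          · exact Finset.sum_congr rfl fun k₂ hk₂ => integral_const_mul _ _
          · exact fun k₂ _ => ((hintg _).const_mul _)
        · exact fun k₁ _ => integrable_finset_sum _ fun k₂ _ => ((hintg _).const_mul _)
end
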